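/- Let P, Q be persistence diagrams (finite multisets of points strictly above the diagonal in ℝ²) with the property that distinct points are at distance ≥ 1 and each point is at distance ≥ 1 from the diagonal. Consider a quadtree with grids G_{-1}, G_0, ..., G_{log Δ} of cell side lengths 1/2, 1, 2, ..., and the modified L₁ distance |V^P − V^Q|_T = Σ_i 2^i Σ_k |p_k − q_k|_T where coordinates corresponding to cells intersecting the diagonal contribute 0. Then there is a constant C (one may take C = 2√2) such that the 1-Wasserstein distance between P and Q satisfies d_W(P,Q) ≤ C·|V^P − V^Q|_T. -/

import Mathlib

noncomputable section
open Finset Classical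

/-- Points in the plane with the Euclidean norm. -/
abbrev Pt := EuclideanSpace ℝ (Fin 2)

/-- Orthogonal projection onto the diagonal line `y = x`. -/
def proj (p : Pt) : Pt := WithLp.toLp 2 (fun _ => (p 0 + p 1) / 2)

/-- Number of points of the (indexed) multiset `P` lying in the grid cell
`[a·s, (a+1)·s) × [b·s, (b+1)·s)` of side length `s`. -/
def cellCount {ι : Type*} [Fintype ι] (P : ι → Pt) (s : ℝ) (a b : ℕ) : ℕ :=
  (Finset.univ.filter fun i =>
    (a : ℝ) * s ≤ P i 0 ∧ P i 0 < ((a : ℝ) + 1) * s ∧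
    (b : ℝ) * s ≤ P i 1 ∧ P i 1 < ((b : ℝ) + 1) * s).card

/-- The modified `L₁` distance `|V^P - V^Q|_T` over the dyadic quadtree grids
`G_{-1}, G_0, …, G_L` of cell side lengths `1/2, 1, 2, …, 2^L` covering `[0, 2^L)²`
(level `i = j - 1` for `j = 0, …, L+1`, of side `2^j / 2`): coordinates of terminal
cells — exactly those with `a = b`, the cells intersecting the diagonal `y = x` —
contribute `0`. -/
def modL1 (L : ℕ) {ι κ : Type*} [Fintype ι] [Fintype κ] (P : ι → Pt) (Q : κ → Pt) : ℝ :=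
  ∑ j ∈ range (L + 2), ((2 : ℝ) ^ j / 2) *
    ∑ a ∈ range (2 ^ (L + 1 - j)), ∑ b ∈ range (2 ^ (L + 1 - j)),
      if a = b then 0
      else |(cellCount P ((2 : ℝ) ^ j / 2) a b : ℝ) - (cellCount Q ((2 : ℝ) ^ j / 2) a b : ℝ)|

/-- The ordinary (unmodified) `L₁` distance `‖V^P - V^Q‖₁` between the quadtree count
vectors, over the same grids. -/
def fullL1 (L : ℕ) {ι κ : Type*} [Fintype ι] [Fintype κ] (P : ι → Pt) (Q : κ → Pt) : ℝ :=
  ∑ j ∈ range (L + 2), ((2 : ℝ) ^ j / 2) *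
    ∑ a ∈ range (2 ^ (L + 1 - j)), ∑ b ∈ range (2 ^ (L + 1 - j)),
      |(cellCount P ((2 : ℝ) ^ j / 2) a b : ℝ) - (cellCount Q ((2 : ℝ) ^ j / 2) a b : ℝ)|

/-- An augmented matching between two indexed multisets of points: each left point is
either matched to a right point (injectively) or to its diagonal projection; right
points not in the image are matched to their diagonal projections. -/
structure AugMatching (m n : ℕ) where
  σ : Fin m → Option (Fin n)
  inj : ∀ i i' j, σ i = some j → σ i' = some j → i = i'

/-- The total Euclidean cost of an augmented matching. -/
def matchCost {m n : ℕ} (P : Fin m → Pt) (Q : Fin n → Pt) (M : AugMatching m n) : ℝ :=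
  (∑ i, (M.σ i).elim (dist (P i) (proj (P i))) (fun j => dist (P i) (Q j))) +
    ∑ j, if ∃ i, M.σ i = some j then 0 else dist (Q j) (proj (Q j))

/-- The 1-Wasserstein distance between two persistence diagrams: the infimum of the
cost over all augmented matchings. -/
def dW {m n : ℕ} (P : Fin m → Pt) (Q : Fin n → Pt) : ℝ :=
  sInf {c | ∃ M : AugMatching m n, matchCost P Q M = c}


/-!
Greedy matching, one step at a time. Let `J` be the lowest level at which the greedy matching
can act: a point of `P` and a point of `Q` share a level-`J` cell, or some point lies in a
terminal level-`J` cell. Match that pair (cost at most `√2 · 2^J / 2`) or that point to the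
diagonal (cost at most `√2 · 2^J / 4`). Below level `J` every removed point sat in a
non-terminal cell containing no point of the other diagram, so its removal lowers each of the
`J` lower level terms by exactly one, i.e. `|V^P - V^Q|_T` by `(2^J - 1) / 2`; from level `J`
on the level terms do not change. The separation hypotheses rule out `J = 0` except for
coinciding pairs, which cost nothing, and for `J ≥ 1` the cost is at most `√2` times the
decrease. Induction on the number of points gives `d_W(P, Q) ≤ √2 · |V^P - V^Q|_T`.
-/

namespace AugMatching

variable {m n : ℕ}

def insertPair (M : AugMatching m n) (i : Fin (m + 1)) (j : Fin (n + 1)) :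
    AugMatching (m + 1) (n + 1) where
  σ := i.insertNth (some j) fun k => (M.σ k).map j.succAbove
  inj := by
    have := M.inj
    simp only [Fin.forall_iff_succAbove i, Fin.insertNth_apply_same,
      Fin.insertNth_apply_succAbove, Option.map_eq_some_iff]
    grind [Fin.succAbove_ne, Fin.succAbove_right_inj]

def insertLeft (M : AugMatching m n) (i : Fin (m + 1)) : AugMatching (m + 1) n where
  σ := i.insertNth none M.σ
  inj := by
    have := M.inj
    simp only [Fin.forall_iff_succAbove i, Fin.insertNth_apply_same,
      Fin.insertNth_apply_succAbove]
    grind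

def insertRight (M : AugMatching m n) (j : Fin (n + 1)) : AugMatching m (n + 1) where
  σ k := (M.σ k).map j.succAbove
  inj := by
    have := M.inj
    simp only [Option.map_eq_some_iff]
    grind [Fin.succAbove_right_inj]

theorem matchCost_insertPair (P : Fin (m + 1) → Pt) (Q : Fin (n + 1) → Pt)
    (M : AugMatching m n) (i : Fin (m + 1)) (j : Fin (n + 1)) :
    matchCost P Q (M.insertPair i j) =
      dist (P i) (Q j) + matchCost (P ∘ i.succAbove) (Q ∘ j.succAbove) M := by
  simp [matchCost, insertPair, Fin.sum_univ_succAbove _ i, Fin.sum_univ_succAbove _ j,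
    Fin.exists_iff_succAbove i, Option.elim_map, Fin.succAbove_ne, Function.comp_def]
  ring

theorem matchCost_insertLeft (P : Fin (m + 1) → Pt) (Q : Fin n → Pt)
    (M : AugMatching m n) (i : Fin (m + 1)) :
    matchCost P Q (M.insertLeft i) =
      dist (P i) (proj (P i)) + matchCost (P ∘ i.succAbove) Q M := by
  simp [matchCost, insertLeft, Fin.sum_univ_succAbove _ i, Fin.exists_iff_succAbove i]
  ring

theorem matchCost_insertRight (P : Fin m → Pt) (Q : Fin (n + 1) → Pt)
    (M : AugMatching m n) (j : Fin (n + 1)) :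
    matchCost P Q (M.insertRight j) =
      dist (Q j) (proj (Q j)) + matchCost P (Q ∘ j.succAbove) M := by
  simp [matchCost, insertRight, Fin.sum_univ_succAbove _ j, Option.elim_map, Fin.succAbove_ne,
    Function.comp_def]
  ring

end AugMatching

section Matching

variable {m n : ℕ}

theorem matchCost_nonneg (P : Fin m → Pt) (Q : Fin n → Pt) (M : AugMatching m n) :
    0 ≤ matchCost P Q M := by
  unfold matchCost
  refine add_nonneg (sum_nonneg fun i _ => ?_) (sum_nonneg fun j _ => ?_)
  · cases M.σ i <;> exact dist_nonneg
  · split_ifs <;> simp [dist_nonneg]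

theorem dW_le_matchCost (P : Fin m → Pt) (Q : Fin n → Pt) (M : AugMatching m n) :
    dW P Q ≤ matchCost P Q M :=
  csInf_le ⟨0, by rintro _ ⟨M, rfl⟩; exact matchCost_nonneg P Q M⟩ ⟨M, rfl⟩

theorem dW_nonpos_of_isEmpty (P : Fin m → Pt) (Q : Fin n → Pt) [IsEmpty (Fin m)]
    [IsEmpty (Fin n)] : dW P Q ≤ 0 :=
  (dW_le_matchCost P Q ⟨isEmptyElim, isEmptyElim⟩).trans_eq <| by simp [matchCost]

theorem dW_le_add_dW {m' n' : ℕ} (P : Fin m → Pt) (Q : Fin n → Pt) (P' : Fin m' → Pt)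
    (Q' : Fin n' → Pt) (c : ℝ) (extend : AugMatching m' n' → AugMatching m n)
    (hcost : ∀ M, matchCost P Q (extend M) = c + matchCost P' Q' M) :
    dW P Q ≤ c + dW P' Q' := by
  rw [← sub_le_iff_le_add']
  refine le_csInf ⟨_, ⟨⟨fun _ => none, by simp⟩, rfl⟩⟩ ?_
  rintro _ ⟨M, rfl⟩
  rw [sub_le_iff_le_add', ← hcost]
  exact dW_le_matchCost P Q (extend M)

theorem dW_le_dist_add_dW (P : Fin (m + 1) → Pt) (Q : Fin (n + 1) → Pt) (i : Fin (m + 1))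
    (k : Fin (n + 1)) : dW P Q ≤ dist (P i) (Q k) + dW (P ∘ i.succAbove) (Q ∘ k.succAbove) :=
  dW_le_add_dW P Q _ _ _ (·.insertPair i k) fun M => M.matchCost_insertPair P Q i k

theorem dW_le_dist_proj_add_dW_left (P : Fin (m + 1) → Pt) (Q : Fin n → Pt) (i : Fin (m + 1)) :
    dW P Q ≤ dist (P i) (proj (P i)) + dW (P ∘ i.succAbove) Q :=
  dW_le_add_dW P Q _ _ _ (·.insertLeft i) fun M => M.matchCost_insertLeft P Q i

theorem dW_le_dist_proj_add_dW_right (P : Fin m → Pt) (Q : Fin (n + 1) → Pt) (k : Fin (n + 1)) :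
    dW P Q ≤ dist (Q k) (proj (Q k)) + dW P (Q ∘ k.succAbove) :=
  dW_le_add_dW P Q _ _ _ (·.insertRight k) fun M => M.matchCost_insertRight P Q k

end Matching

/-- All grids refine the finest one, of side `1/2`, so for `t ≥ 0` the index of the cell of
side `2^j / 2` containing `t` is `⌊2t⌋ / 2^j`. -/
def gridIndex (j : ℕ) (t : ℝ) : ℕ := ⌊2 * t⌋₊ / 2 ^ j

theorem gridIndex_eq_iff {t : ℝ} (ht : 0 ≤ t) (j a : ℕ) :
    gridIndex j t = a ↔ a * (2 ^ j / 2) ≤ t ∧ t < (a + 1) * (2 ^ j / 2) := by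
  have hs : (0 : ℝ) < 2 ^ j / 2 := by positivity
  have : gridIndex j t = ⌊t / (2 ^ j / 2)⌋₊ := by
    rw [gridIndex, ← Nat.floor_div_natCast]
    congr 1
    push_cast
    field_simp
  rw [this, Nat.floor_eq_iff (by positivity), le_div_iff₀ hs, div_lt_iff₀ hs]

theorem gridIndex_lt {L : ℕ} {t : ℝ} (ht : t ∈ Set.Ico (0 : ℝ) (2 ^ L)) {j : ℕ}
    (hj : j ≤ L + 1) : gridIndex j t < 2 ^ (L + 1 - j) := by
  have h2t : ⌊2 * t⌋₊ < 2 ^ (L + 1) := by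
    rw [Nat.floor_lt (by linarith [ht.1])]
    push_cast
    linarith [ht.2, pow_succ (2 : ℝ) L]
  rw [gridIndex, Nat.div_lt_iff_lt_mul (by positivity), ← pow_add, Nat.sub_add_cancel hj]
  exact h2t

theorem gridIndex_of_le (t : ℝ) {j j' : ℕ} (h : j ≤ j') :
    gridIndex j' t = gridIndex j t / 2 ^ (j' - j) := by
  rw [gridIndex, gridIndex, Nat.div_div_eq_div_mul, ← pow_add, Nat.add_sub_cancel' h]

def cell (j : ℕ) (x : Pt) : ℕ × ℕ := (gridIndex j (x 0), gridIndex j (x 1))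

def IsTerminal (c : ℕ × ℕ) : Prop := c.1 = c.2

theorem cell_eq_iff {x : Pt} (hx : ∀ k, 0 ≤ x k) (j : ℕ) (c : ℕ × ℕ) :
    cell j x = c ↔ (c.1 * (2 ^ j / 2) ≤ x 0 ∧ x 0 < (c.1 + 1) * (2 ^ j / 2)) ∧
      (c.2 * (2 ^ j / 2) ≤ x 1 ∧ x 1 < (c.2 + 1) * (2 ^ j / 2)) := by
  rw [← gridIndex_eq_iff (hx 0), ← gridIndex_eq_iff (hx 1), Prod.ext_iff]
  rfl

def gridBox (L : ℕ) : Set Pt := {x | ∀ k, x k ∈ Set.Ico (0 : ℝ) (2 ^ L)}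

theorem cell_mem_grid {L : ℕ} {x : Pt} (hx : x ∈ gridBox L) {j : ℕ}
    (hj : j ≤ L + 1) : cell j x ∈ range (2 ^ (L + 1 - j)) ×ˢ range (2 ^ (L + 1 - j)) := by
  simp only [cell, mem_product, mem_range]
  exact ⟨gridIndex_lt (hx 0) hj, gridIndex_lt (hx 1) hj⟩

theorem cell_eq_of_le {x y : Pt} {j j' : ℕ} (h : j ≤ j') (hxy : cell j x = cell j y) :
    cell j' x = cell j' y := by
  simp only [cell, Prod.ext_iff] at hxy ⊢
  simp only [gridIndex_of_le _ h, hxy, and_self]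

theorem IsTerminal.of_le {x : Pt} {j j' : ℕ} (h : j ≤ j') (hx : IsTerminal (cell j x)) :
    IsTerminal (cell j' x) := by
  simp only [IsTerminal, cell] at hx ⊢
  rw [gridIndex_of_le _ h, gridIndex_of_le _ h, hx]

theorem isTerminal_cell_top {L : ℕ} {x : Pt} (hx : x ∈ gridBox L) :
    IsTerminal (cell (L + 1) x) := by
  have h := cell_mem_grid hx le_rfl
  simp only [Nat.sub_self, pow_zero, range_one, mem_product, mem_singleton] at h
  exact h.1.trans h.2.symm

theorem dist_eq_sqrt (x y : Pt) : dist x y = √((x 0 - y 0) ^ 2 + (x 1 - y 1) ^ 2) := by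
  simp [EuclideanSpace.dist_eq, Fin.sum_univ_two, Real.dist_eq, sq_abs]

theorem dist_le_of_cell_eq {x y : Pt} (hx : ∀ k, 0 ≤ x k) (hy : ∀ k, 0 ≤ y k) {j : ℕ}
    (h : cell j x = cell j y) : dist x y ≤ √2 * (2 ^ j / 2) := by
  obtain ⟨⟨hx0, hx0'⟩, hx1, hx1'⟩ := (cell_eq_iff hx j _).mp h
  obtain ⟨⟨hy0, hy0'⟩, hy1, hy1'⟩ := (cell_eq_iff hy j _).mp rfl
  have h0 : (x 0 - y 0) ^ 2 ≤ (2 ^ j / 2) ^ 2 := sq_le_sq' (by linarith) (by linarith)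
  have h1 : (x 1 - y 1) ^ 2 ≤ (2 ^ j / 2) ^ 2 := sq_le_sq' (by linarith) (by linarith)
  calc dist x y ≤ √(2 * (2 ^ j / 2) ^ 2) := by rw [dist_eq_sqrt]; gcongr; linarith
    _ = √2 * (2 ^ j / 2) := by rw [Real.sqrt_mul zero_le_two, Real.sqrt_sq (by positivity)]

theorem dist_proj_eq (x : Pt) : dist x (proj x) = |x 1 - x 0| / √2 := by
  have hproj : ∀ k, proj x k = (x 0 + x 1) / 2 := fun _ => rfl
  have h : (x 0 - (x 0 + x 1) / 2) ^ 2 + (x 1 - (x 0 + x 1) / 2) ^ 2 = |x 1 - x 0| ^ 2 / 2 := by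
    rw [sq_abs]; ring
  rw [dist_eq_sqrt, hproj, hproj, h, Real.sqrt_div' _ zero_le_two, Real.sqrt_sq (abs_nonneg _)]

theorem div_sqrt_two_le_dist_proj (x : Pt) : (x 1 - x 0) / √2 ≤ dist x (proj x) := by
  rw [dist_proj_eq]
  gcongr
  exact le_abs_self _

theorem dist_le_of_cell_eq_of_sep {x y : Pt} (hx : ∀ k, 0 ≤ x k) (hy : ∀ k, 0 ≤ y k)
    {j : ℕ} (h : cell j x = cell j y) (hsep : x ≠ y → 1 ≤ dist x y) :
    dist x y ≤ √2 * (2 ^ j - 1) := by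
  have hcell := dist_le_of_cell_eq hx hy h
  rcases j with _ | j
  · obtain rfl : x = y := by
      by_contra hxy
      nlinarith [hsep hxy, Real.sq_sqrt (zero_le_two : (0 : ℝ) ≤ 2), Real.sqrt_nonneg 2]
    simp
  · have : (2 : ℝ) ^ (j + 1) / 2 ≤ 2 ^ (j + 1) - 1 := by
      rw [pow_succ]; linarith [one_le_pow₀ (M₀ := ℝ) one_le_two (n := j)]
    exact hcell.trans (by gcongr)

theorem dist_proj_le_of_isTerminal {x : Pt} (hx : ∀ k, 0 ≤ x k) {j : ℕ}
    (ht : IsTerminal (cell j x)) (hgap : 1 ≤ dist x (proj x)) :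
    dist x (proj x) ≤ √2 * (2 ^ j - 1) / 2 := by
  obtain ⟨⟨hx0, hx0'⟩, hx1, hx1'⟩ := (cell_eq_iff hx j _).mp rfl
  rw [IsTerminal] at ht
  rw [ht] at hx0 hx0'
  have hside : |x 1 - x 0| ≤ 2 ^ j / 2 := abs_sub_le_iff.mpr ⟨by linarith, by linarith⟩
  have hs2 : √2 * √2 = 2 := Real.mul_self_sqrt zero_le_two
  have hdist : dist x (proj x) * √2 ≤ 2 ^ j / 2 := by
    rw [dist_proj_eq, div_mul_cancel₀ _ (by positivity)]; exact hside
  rcases j with _ | j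
  · nlinarith [Real.sqrt_nonneg 2]
  · have : (1 : ℝ) ≤ 2 ^ j := one_le_pow₀ one_le_two
    rw [pow_succ] at hdist ⊢
    nlinarith [Real.sqrt_nonneg 2]

theorem cellCount_succAbove {m : ℕ} (P : Fin (m + 1) → Pt) (i : Fin (m + 1))
    (hi : ∀ k, 0 ≤ P i k) (j : ℕ) (c : ℕ × ℕ) :
    cellCount P (2 ^ j / 2) c.1 c.2 =
      cellCount (P ∘ i.succAbove) (2 ^ j / 2) c.1 c.2 + if cell j (P i) = c then 1 else 0 := by
  simp only [cellCount, card_filter, Fin.sum_univ_succAbove _ i, cell_eq_iff hi, and_assoc,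
    Function.comp_apply]
  ring

theorem cellCount_eq_zero {ι : Type*} [Fintype ι] {P : ι → Pt} (hP : ∀ i k, 0 ≤ P i k)
    {j : ℕ} {c : ℕ × ℕ} (h : ∀ i, cell j (P i) ≠ c) :
    cellCount P (2 ^ j / 2) c.1 c.2 = 0 := by
  simp only [cellCount, card_eq_zero, filter_eq_empty_iff, mem_univ, true_implies]
  intro i hi
  exact h i ((cell_eq_iff (hP i) j c).mpr (by simpa only [and_assoc] using hi))

section Levels

variable (L j : ℕ) {ι κ : Type*} [Fintype ι] [Fintype κ]

def levelL1 (P : ι → Pt) (Q : κ → Pt) : ℝ :=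
  ∑ c ∈ range (2 ^ (L + 1 - j)) ×ˢ range (2 ^ (L + 1 - j)),
    if c.1 = c.2 then 0
    else |(cellCount P ((2 : ℝ) ^ j / 2) c.1 c.2 : ℝ) -
      (cellCount Q ((2 : ℝ) ^ j / 2) c.1 c.2 : ℝ)|

theorem modL1_eq_sum_levelL1 (P : ι → Pt) (Q : κ → Pt) :
    modL1 L P Q = ∑ j ∈ range (L + 2), (2 : ℝ) ^ j / 2 * levelL1 L j P Q := by
  simp only [modL1, levelL1, sum_product]

theorem levelL1_comm (P : ι → Pt) (Q : κ → Pt) : levelL1 L j P Q = levelL1 L j Q P := by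
  simp only [levelL1, abs_sub_comm]

theorem levelL1_nonneg (P : ι → Pt) (Q : κ → Pt) : 0 ≤ levelL1 L j P Q :=
  sum_nonneg fun _ _ => by split_ifs <;> positivity

theorem modL1_comm (P : ι → Pt) (Q : κ → Pt) : modL1 L P Q = modL1 L Q P := by
  simp only [modL1_eq_sum_levelL1, levelL1_comm L _ P Q]

theorem modL1_nonneg (P : ι → Pt) (Q : κ → Pt) : 0 ≤ modL1 L P Q := by
  rw [modL1_eq_sum_levelL1]
  exact sum_nonneg fun j _ => mul_nonneg (by positivity) (levelL1_nonneg L j P Q)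

end Levels

section Removal

variable {L j m : ℕ} {κ : Type*} [Fintype κ]

theorem levelL1_succAbove_of_isTerminal (P : Fin (m + 1) → Pt) (Q : κ → Pt) {i : Fin (m + 1)}
    (hi : ∀ k, 0 ≤ P i k) (ht : IsTerminal (cell j (P i))) :
    levelL1 L j (P ∘ i.succAbove) Q = levelL1 L j P Q := by
  refine sum_congr rfl fun c _ => ?_
  split_ifs with hc
  · rfl
  · rw [cellCount_succAbove P i hi j c, if_neg (by rintro rfl; exact hc ht)]
    rfl

theorem levelL1_succAbove_succAbove_of_cell_eq {n : ℕ} (P : Fin (m + 1) → Pt)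
    (Q : Fin (n + 1) → Pt) {i : Fin (m + 1)} {k : Fin (n + 1)} (hi : ∀ l, 0 ≤ P i l)
    (hk : ∀ l, 0 ≤ Q k l) (h : cell j (P i) = cell j (Q k)) :
    levelL1 L j (P ∘ i.succAbove) (Q ∘ k.succAbove) = levelL1 L j P Q := by
  refine sum_congr rfl fun c _ => ?_
  split_ifs
  · rfl
  · rw [cellCount_succAbove P i hi j c, cellCount_succAbove Q k hk j c, h]
    push_cast
    congr 1
    ring

theorem levelL1_eq_succAbove_add_one (P : Fin (m + 1) → Pt) (Q : κ → Pt) {i : Fin (m + 1)}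
    (hi : P i ∈ gridBox L) (hj : j ≤ L + 1)
    (hnt : ¬ IsTerminal (cell j (P i)))
    (hQ : cellCount Q (2 ^ j / 2) (cell j (P i)).1 (cell j (P i)).2 = 0) :
    levelL1 L j P Q = levelL1 L j (P ∘ i.succAbove) Q + 1 := by
  have hi0 : ∀ k, 0 ≤ P i k := fun k => (hi k).1
  have hmem := cell_mem_grid hi hj
  rw [IsTerminal] at hnt
  rw [levelL1, levelL1, ← add_sum_erase _ _ hmem, ← add_sum_erase _ _ hmem,
    if_neg hnt, if_neg hnt, cellCount_succAbove P i hi0 j, if_pos rfl, hQ, add_right_comm]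
  congr 1
  · push_cast
    rw [sub_zero, sub_zero, abs_of_nonneg (by positivity), abs_of_nonneg (by positivity)]
  · refine sum_congr rfl fun c hc => ?_
    rw [cellCount_succAbove P i hi0 j c, if_neg (ne_of_mem_erase hc).symm]
    rfl

end Removal

theorem modL1_eq_add_of_levelL1 {L J : ℕ} {ι κ ι' κ' : Type*} [Fintype ι] [Fintype κ]
    [Fintype ι'] [Fintype κ'] {P : ι → Pt} {Q : κ → Pt} {P' : ι' → Pt} {Q' : κ' → Pt}
    (hJ : J ≤ L + 2) (c : ℝ) (hlow : ∀ j < J, levelL1 L j P Q = levelL1 L j P' Q' + c)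
    (hhigh : ∀ j, J ≤ j → levelL1 L j P Q = levelL1 L j P' Q') :
    modL1 L P Q = modL1 L P' Q' + c * ((2 ^ J - 1) / 2) := by
  have hgeom : ∑ j ∈ range J, (2 : ℝ) ^ j / 2 = (2 ^ J - 1) / 2 := by
    rw [← sum_div, geom_sum_eq (by norm_num)]; norm_num
  have hlow' : ∑ j ∈ range J, (2 : ℝ) ^ j / 2 * levelL1 L j P Q =
      ∑ j ∈ range J, ((2 : ℝ) ^ j / 2 * levelL1 L j P' Q' + 2 ^ j / 2 * c) :=
    sum_congr rfl fun j hj => by rw [hlow j (mem_range.mp hj), mul_add]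
  have hhigh' : ∑ j ∈ Ico J (L + 2), (2 : ℝ) ^ j / 2 * levelL1 L j P Q =
      ∑ j ∈ Ico J (L + 2), (2 : ℝ) ^ j / 2 * levelL1 L j P' Q' :=
    sum_congr rfl fun j hj => by rw [hhigh j (mem_Ico.mp hj).1]
  rw [modL1_eq_sum_levelL1, modL1_eq_sum_levelL1, ← sum_range_add_sum_Ico _ hJ,
    ← sum_range_add_sum_Ico _ hJ, hlow', hhigh', sum_add_distrib, ← sum_mul, hgeom]
  ring

section FirstMatch

variable {L J m n : ℕ} {ι κ : Type*}

def HasMatchAt (j : ℕ) (P : ι → Pt) (Q : κ → Pt) : Prop :=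
  (∃ i k, cell j (P i) = cell j (Q k)) ∨ (∃ i, IsTerminal (cell j (P i))) ∨
    ∃ k, IsTerminal (cell j (Q k))

theorem HasMatchAt.symm {j : ℕ} {P : ι → Pt} {Q : κ → Pt} (h : HasMatchAt j P Q) :
    HasMatchAt j Q P := by
  rcases h with ⟨i, k, h⟩ | h | h
  exacts [Or.inl ⟨k, i, h.symm⟩, Or.inr (Or.inr h), Or.inr (Or.inl h)]

theorem HasMatchAt.of_comp_left {ι' : Type*} {j : ℕ} {P : ι → Pt} {Q : κ → Pt}
    (f : ι' → ι) (h : HasMatchAt j (P ∘ f) Q) : HasMatchAt j P Q := by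
  rcases h with ⟨i, k, h⟩ | ⟨i, h⟩ | h
  exacts [Or.inl ⟨f i, k, h⟩, Or.inr (Or.inl ⟨f i, h⟩), Or.inr (Or.inr h)]

theorem exists_first_hasMatchAt {P : ι → Pt} {Q : κ → Pt}
    (h : ∀ u, Sum.elim P Q u ∈ gridBox L) (u : ι ⊕ κ) :
    ∃ J ≤ L + 1, HasMatchAt J P Q ∧ ∀ j < J, ¬ HasMatchAt j P Q := by
  have hL : HasMatchAt (L + 1) P Q := by
    rcases u with i | k
    · exact Or.inr (Or.inl ⟨i, isTerminal_cell_top (h (.inl i))⟩)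
    · exact Or.inr (Or.inr ⟨k, isTerminal_cell_top (h (.inr k))⟩)
  have hex : ∃ J, HasMatchAt J P Q := ⟨_, hL⟩
  exact ⟨Nat.find hex, Nat.find_le hL, Nat.find_spec hex, fun j => Nat.find_min hex⟩

theorem levelL1_eq_succAbove_add_one_of_not_hasMatchAt [Fintype κ] {j : ℕ}
    (P : Fin (m + 1) → Pt) (Q : κ → Pt) (hP : ∀ i, P i ∈ gridBox L)
    (hQ : ∀ k l, 0 ≤ Q k l)    (hj : j ≤ L + 1) (h : ¬ HasMatchAt j P Q) (i : Fin (m + 1)) :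
    levelL1 L j P Q = levelL1 L j (P ∘ i.succAbove) Q + 1 :=
  levelL1_eq_succAbove_add_one P Q (hP i) hj (fun ht => h (Or.inr (Or.inl ⟨i, ht⟩)))
    (cellCount_eq_zero hQ fun k hk => h (Or.inl ⟨i, k, hk.symm⟩))

theorem modL1_eq_of_cell_eq (P : Fin (m + 1) → Pt) (Q : Fin (n + 1) → Pt)
    (hP : ∀ i, P i ∈ gridBox L) (hQ : ∀ k, Q k ∈ gridBox L)
    (hJ : J ≤ L + 1) (hbelow : ∀ j < J, ¬ HasMatchAt j P Q) {i : Fin (m + 1)}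
    {k : Fin (n + 1)} (h : cell J (P i) = cell J (Q k)) :
    modL1 L P Q = modL1 L (P ∘ i.succAbove) (Q ∘ k.succAbove) + 2 * ((2 ^ J - 1) / 2) := by
  refine modL1_eq_add_of_levelL1 (by omega) 2 (fun j hj => ?_) fun j hj =>
    (levelL1_succAbove_succAbove_of_cell_eq P Q (fun l => (hP i l).1) (fun l => (hQ k l).1)
      (cell_eq_of_le hj h)).symm
  have hj' : j ≤ L + 1 := by omega
  rw [levelL1_eq_succAbove_add_one_of_not_hasMatchAt P Q hP (fun k l => (hQ k l).1) hj'
      (hbelow j hj) i, levelL1_comm L j _ Q, levelL1_comm L j _ (Q ∘ _),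
    levelL1_eq_succAbove_add_one_of_not_hasMatchAt Q (P ∘ i.succAbove) hQ
      (fun _ l => (hP _ l).1) hj' (fun h' => hbelow j hj (h'.symm.of_comp_left _)) k]
  ring

theorem modL1_eq_of_isTerminal [Fintype κ] (P : Fin (m + 1) → Pt) (Q : κ → Pt)
    (hP : ∀ i, P i ∈ gridBox L) (hQ : ∀ k l, 0 ≤ Q k l) (hJ : J ≤ L + 1)
    (hbelow : ∀ j < J, ¬ HasMatchAt j P Q) {i : Fin (m + 1)} (ht : IsTerminal (cell J (P i))) :
    modL1 L P Q = modL1 L (P ∘ i.succAbove) Q + (2 ^ J - 1) / 2 := by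
  rw [← one_mul ((2 ^ J - 1 : ℝ) / 2)]
  exact modL1_eq_add_of_levelL1 (by omega) 1
    (fun j hj => levelL1_eq_succAbove_add_one_of_not_hasMatchAt P Q hP hQ (by omega)
      (hbelow j hj) i)
    fun j hj => (levelL1_succAbove_of_isTerminal P Q (fun l => (hP i l).1) (ht.of_le hj)).symm

end FirstMatch

structure IsSeparatedDiagram (L : ℕ) {ι : Type*} (R : ι → Pt) : Prop where
  mem_gridBox : ∀ u, R u ∈ gridBox L
  one_le_dist : ∀ u v, R u ≠ R v → 1 ≤ dist (R u) (R v)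
  one_le_dist_proj : ∀ u, 1 ≤ dist (R u) (proj (R u))

namespace IsSeparatedDiagram

variable {L m n : ℕ}

theorem comp {ι κ : Type*} {R : ι → Pt} (h : IsSeparatedDiagram L R) (f : κ → ι) :
    IsSeparatedDiagram L (R ∘ f) :=
  ⟨fun u => h.mem_gridBox (f u), fun u v => h.one_le_dist (f u) (f v),
    fun u => h.one_le_dist_proj (f u)⟩

theorem sum_elim_comp {ι κ ι' κ' : Type*} {P : ι → Pt} {Q : κ → Pt}
    (h : IsSeparatedDiagram L (Sum.elim P Q)) (f : ι' → ι) (g : κ' → κ) :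
    IsSeparatedDiagram L (Sum.elim (P ∘ f) (Q ∘ g)) := by
  simpa only [Sum.elim_comp_map] using h.comp (Sum.map f g)

theorem dW_le_of_cell_eq {J : ℕ} {P : Fin (m + 1) → Pt} {Q : Fin (n + 1) → Pt}
    (h : IsSeparatedDiagram L (Sum.elim P Q)) (hJ : J ≤ L + 1)
    (hbelow : ∀ j < J, ¬ HasMatchAt j P Q) {i : Fin (m + 1)} {k : Fin (n + 1)}
    (hik : cell J (P i) = cell J (Q k))
    (ih : dW (P ∘ i.succAbove) (Q ∘ k.succAbove) ≤
      √2 * modL1 L (P ∘ i.succAbove) (Q ∘ k.succAbove)) :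
    dW P Q ≤ √2 * modL1 L P Q := by
  have hP : ∀ i, P i ∈ gridBox L := fun i => h.mem_gridBox (.inl i)
  have hQ : ∀ k, Q k ∈ gridBox L := fun k => h.mem_gridBox (.inr k)
  have hcost := dist_le_of_cell_eq_of_sep (fun l => (hP i l).1) (fun l => (hQ k l).1) hik
    (h.one_le_dist (.inl i) (.inr k))
  rw [modL1_eq_of_cell_eq P Q hP hQ hJ hbelow hik]
  linear_combination dW_le_dist_add_dW P Q i k + hcost + ih

theorem dW_le_of_isTerminal_left {J : ℕ} {P : Fin (m + 1) → Pt} {Q : Fin n → Pt}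
    (h : IsSeparatedDiagram L (Sum.elim P Q)) (hJ : J ≤ L + 1)
    (hbelow : ∀ j < J, ¬ HasMatchAt j P Q) {i : Fin (m + 1)} (ht : IsTerminal (cell J (P i)))
    (ih : dW (P ∘ i.succAbove) Q ≤ √2 * modL1 L (P ∘ i.succAbove) Q) :
    dW P Q ≤ √2 * modL1 L P Q := by
  have hP : ∀ i, P i ∈ gridBox L := fun i => h.mem_gridBox (.inl i)
  have hcost := dist_proj_le_of_isTerminal (fun l => (hP i l).1) ht (h.one_le_dist_proj (.inl i))
  rw [modL1_eq_of_isTerminal P Q hP (fun k l => (h.mem_gridBox (.inr k) l).1) hJ hbelow ht]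
  linear_combination dW_le_dist_proj_add_dW_left P Q i + hcost + ih

theorem dW_le_of_isTerminal_right {J : ℕ} {P : Fin m → Pt} {Q : Fin (n + 1) → Pt}
    (h : IsSeparatedDiagram L (Sum.elim P Q)) (hJ : J ≤ L + 1)
    (hbelow : ∀ j < J, ¬ HasMatchAt j P Q) {k : Fin (n + 1)} (ht : IsTerminal (cell J (Q k)))
    (ih : dW P (Q ∘ k.succAbove) ≤ √2 * modL1 L P (Q ∘ k.succAbove)) :
    dW P Q ≤ √2 * modL1 L P Q := by
  have hQ : ∀ k, Q k ∈ gridBox L := fun k => h.mem_gridBox (.inr k)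
  have hcost := dist_proj_le_of_isTerminal (fun l => (hQ k l).1) ht (h.one_le_dist_proj (.inr k))
  rw [modL1_comm, modL1_eq_of_isTerminal Q P hQ (fun i l => (h.mem_gridBox (.inl i) l).1) hJ
    (fun j hj h' => hbelow j hj h'.symm) ht, modL1_comm]
  linear_combination dW_le_dist_proj_add_dW_right P Q k + hcost + ih

end IsSeparatedDiagram

theorem IsSeparatedDiagram.dW_le_sqrt_two_mul_modL1 {L m n : ℕ} {P : Fin m → Pt}
    {Q : Fin n → Pt} (h : IsSeparatedDiagram L (Sum.elim P Q)) :
    dW P Q ≤ √2 * modL1 L P Q := by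
  rcases isEmpty_or_nonempty (Fin m ⊕ Fin n) with hempty | ⟨⟨u⟩⟩
  · obtain ⟨_, _⟩ := isEmpty_sum.mp hempty
    exact (dW_nonpos_of_isEmpty P Q).trans (mul_nonneg (by positivity) (modL1_nonneg L P Q))
  obtain ⟨J, hJ, hmatch, hbelow⟩ := exists_first_hasMatchAt h.mem_gridBox u
  rcases hmatch with ⟨i, k, hik⟩ | ⟨i, hi⟩ | ⟨k, hk⟩
  · obtain ⟨m, rfl⟩ := Nat.exists_eq_add_one_of_ne_zero i.pos.ne'
    obtain ⟨n, rfl⟩ := Nat.exists_eq_add_one_of_ne_zero k.pos.ne'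
    exact h.dW_le_of_cell_eq hJ hbelow hik
      (h.sum_elim_comp i.succAbove k.succAbove).dW_le_sqrt_two_mul_modL1
  · obtain ⟨m, rfl⟩ := Nat.exists_eq_add_one_of_ne_zero i.pos.ne'
    exact h.dW_le_of_isTerminal_left hJ hbelow hi
      (h.sum_elim_comp i.succAbove id).dW_le_sqrt_two_mul_modL1
  · obtain ⟨n, rfl⟩ := Nat.exists_eq_add_one_of_ne_zero k.pos.ne'
    exact h.dW_le_of_isTerminal_right hJ hbelow hk
      (h.sum_elim_comp id k.succAbove).dW_le_sqrt_two_mul_modL1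
termination_by m + n

theorem dW_le_modL1_general (L m n : ℕ) (P : Fin m → Pt) (Q : Fin n → Pt)
    (hrange : ∀ u : Fin m ⊕ Fin n, ∀ k, Sum.elim P Q u k ∈ Set.Ico (0 : ℝ) (2 ^ L))
    (hsep : ∀ u v : Fin m ⊕ Fin n, Sum.elim P Q u ≠ Sum.elim P Q v →
      1 ≤ dist (Sum.elim P Q u) (Sum.elim P Q v))
    (hdiag : ∀ u : Fin m ⊕ Fin n,
      1 ≤ (Sum.elim P Q u 1 - Sum.elim P Q u 0) / Real.sqrt 2) :
    dW P Q ≤ 2 * Real.sqrt 2 * modL1 L P Q := by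
  have h : IsSeparatedDiagram L (Sum.elim P Q) :=
    ⟨hrange, hsep, fun u => (hdiag u).trans (div_sqrt_two_le_dist_proj _)⟩
  calc dW P Q ≤ √2 * modL1 L P Q := h.dW_le_sqrt_two_mul_modL1
    _ ≤ 2 * √2 * modL1 L P Q := by
      have := modL1_nonneg L P Q
      nlinarith [Real.sqrt_nonneg 2]

/-- Lemma 3 (lower bound): for persistence diagrams `P`, `Q` above the diagonal in
`[0, 2^L)²`, with pairwise distances `≥ 1` between distinct points and distance `≥ 1`
to the diagonal, the 1-Wasserstein distance satisfies
`d_W(P, Q) ≤ 2√2 · |V^P - V^Q|_T`. -/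
theorem dW_le_modL1 (L m n : ℕ) (P : Fin m → Pt) (Q : Fin n → Pt)
    (hrange : ∀ u : Fin m ⊕ Fin n, ∀ k, Sum.elim P Q u k ∈ Set.Ico (0 : ℝ) (2 ^ L))
    (habove : ∀ u : Fin m ⊕ Fin n, Sum.elim P Q u 0 < Sum.elim P Q u 1)
    (hsep : ∀ u v : Fin m ⊕ Fin n, Sum.elim P Q u ≠ Sum.elim P Q v →
      1 ≤ dist (Sum.elim P Q u) (Sum.elim P Q v))
    (hdiag : ∀ u : Fin m ⊕ Fin n,
      1 ≤ (Sum.elim P Q u 1 - Sum.elim P Q u 0) / Real.sqrt 2) :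
    dW P Q ≤ 2 * Real.sqrt 2 * modL1 L P Q :=
  dW_le_modL1_general L m n P Q hrange hsep hdiag
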